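/- arXiv:2211.06636 — 3 statements merged into one kernel-verified Lean document; each statement's English description precedes it below -/
import Mathlib

section
/- Let S and T be finite sets of items with profit p and cost c (both positive reals). If the total profit of S\T is strictly less than that of T\S, and every item in S\T has density p/c at least as large as every item in T\S, then the total cost of S\T is strictly less than the total cost of T\S. -/
/-- If the total profit of S\T is strictly less than that of T\S,
and every item of S\T has density at least that of every item of T\S,
then the total cost of S\T is strictly less than the total cost of T\S. -/
theorem stmt_0 {ι : Type*} [DecidableEq ι] (p c : ι → ℝ)
    (hp : ∀ j, 0 < p j) (hc : ∀ j, 0 < c j)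
    (S T : Finset ι)
    (hprof : ∑ j ∈ S \ T, p j < ∑ j ∈ T \ S, p j)
    (hdens : ∀ u ∈ S \ T, ∀ v ∈ T \ S, p v / c v ≤ p u / c u) :
    ∑ j ∈ S \ T, c j < ∑ j ∈ T \ S, c j := by
  have hne : (T \ S).Nonempty := by
    by_contra h
    rw [Finset.not_nonempty_iff_eq_empty] at h
    rw [h, Finset.sum_empty] at hprof
    exact absurd hprof (not_lt.2 (Finset.sum_nonneg fun j _ => (hp j).le))
  obtain ⟨v0, hv0, hv0max⟩ := Finset.exists_max_image (T \ S) (fun v => p v / c v) hne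
  set d := p v0 / c v0 with hd
  have hdpos : 0 < d := div_pos (hp v0) (hc v0)
  have h1 : ∑ j ∈ S \ T, c j ≤ ∑ j ∈ S \ T, p j / d := by
    apply Finset.sum_le_sum
    intro u hu
    have h := hdens u hu v0 hv0
    rw [div_le_div_iff₀ (hc v0) (hc u)] at h
    rw [le_div_iff₀ hdpos, hd, mul_div_assoc', div_le_iff₀ (hc v0)]
    nlinarith [h]
  have h2 : ∑ j ∈ T \ S, p j / d ≤ ∑ j ∈ T \ S, c j := by
    apply Finset.sum_le_sum
    intro v hv
    have h := hv0max v hv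
    rw [div_le_iff₀ hdpos]
    rw [div_le_div_iff₀ (hc v) (hc v0)] at h
    have := mul_le_mul_of_nonneg_left h (le_of_lt (inv_pos.2 (hc v0)))
    calc p v = (c v0)⁻¹ * (p v * c v0) := by
            rw [mul_comm, mul_assoc, mul_inv_cancel₀ (hc v0).ne', mul_one]
      _ ≤ (c v0)⁻¹ * (p v0 * c v) := this
      _ = c v * d := by rw [hd]; field_simp
  have h3 : ∑ j ∈ S \ T, p j / d < ∑ j ∈ T \ S, p j / d := by
    rw [← Finset.sum_div, ← Finset.sum_div]
    gcongr
  linarith [h1, h2, h3]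
end

section
/- Let S = {k_1, ..., k_l} be a set of items consisting of the l items of largest density (so every item not in S has density at most the minimum density in S). If S is critical with respect to budget B, i.e., W(S) > B, then for every set T of items with W(T) \le B we have P(S) \ge P(T). -/
/-- If S consists of items of largest density and is critical
(W(S) > B), then P(S) ≥ P(T) for every feasible T (W(T) ≤ B). -/
theorem stmt_1 {ι : Type*} [DecidableEq ι] (p c : ι → ℝ)
    (hp : ∀ j, 0 < p j) (hc : ∀ j, 0 < c j) (B : ℝ) (hB : 0 < B)
    (S : Finset ι)
    (hdens : ∀ s ∈ S, ∀ t ∉ S, p t / c t ≤ p s / c s)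
    (hcrit : B < ∑ j ∈ S, c j) :
    ∀ T : Finset ι, ∑ j ∈ T, c j ≤ B → ∑ j ∈ T, p j ≤ ∑ j ∈ S, p j := by
  intro T hT
  have hS : S.Nonempty := by
    rcases S.eq_empty_or_nonempty with h | h
    · exfalso; rw [h] at hcrit; simp at hcrit; linarith
    · exact h
  obtain ⟨s₀, hs₀, hmin⟩ := S.exists_min_image (fun s => p s / c s) hS
  set d := p s₀ / c s₀ with hd
  have hdpos : 0 < d := div_pos (hp s₀) (hc s₀)
  have h1 : ∀ s ∈ S, d * c s ≤ p s := fun s hs => by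
    have h := hmin s hs
    calc d * c s ≤ (p s / c s) * c s :=
          mul_le_mul_of_nonneg_right h (hc s).le
      _ = p s := div_mul_cancel₀ _ (hc s).ne'
  have h2 : ∀ t ∉ S, p t ≤ d * c t := fun t ht => by
    have h := hdens s₀ hs₀ t ht
    calc p t = (p t / c t) * c t := (div_mul_cancel₀ _ (hc t).ne').symm
      _ ≤ d * c t := mul_le_mul_of_nonneg_right h (hc t).le
  have hsplitT : ∑ j ∈ T, p j = ∑ j ∈ T ∩ S, p j + ∑ j ∈ T \ S, p j :=
    (Finset.sum_inter_add_sum_sdiff T S p).symm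
  have hsplitS : ∑ j ∈ S, p j = ∑ j ∈ S ∩ T, p j + ∑ j ∈ S \ T, p j :=
    (Finset.sum_inter_add_sum_sdiff S T p).symm
  have hcT : ∑ j ∈ T, c j = ∑ j ∈ T ∩ S, c j + ∑ j ∈ T \ S, c j :=
    (Finset.sum_inter_add_sum_sdiff T S c).symm
  have hcS : ∑ j ∈ S, c j = ∑ j ∈ S ∩ T, c j + ∑ j ∈ S \ T, c j :=
    (Finset.sum_inter_add_sum_sdiff S T c).symm
  have hIC : T ∩ S = S ∩ T := Finset.inter_comm T S
  have hW : ∑ j ∈ T \ S, c j ≤ ∑ j ∈ S \ T, c j := by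
    rw [hIC] at hcT; linarith
  have hTp : ∑ j ∈ T \ S, p j ≤ d * ∑ j ∈ T \ S, c j := by
    rw [Finset.mul_sum]
    exact Finset.sum_le_sum fun i hi => h2 i (Finset.mem_sdiff.mp hi).2
  have hSp : d * ∑ j ∈ S \ T, c j ≤ ∑ j ∈ S \ T, p j := by
    rw [Finset.mul_sum]
    exact Finset.sum_le_sum fun i hi => h1 i (Finset.mem_sdiff.mp hi).1
  have hmul : d * ∑ j ∈ T \ S, c j ≤ d * ∑ j ∈ S \ T, c j :=
    mul_le_mul_of_nonneg_left hW hdpos.le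
  rw [hsplitT, hsplitS, hIC]
  linarith
end

section
/- Let S_1, ..., S_{m+\Delta} be pairwise disjoint sets of items whose union S consists of the items of largest density (every item in S has density at least that of every item outside S). Suppose at least m of the sets S_i satisfy W(S_i) > B. Then for any family T_1, ..., T_m of pairwise disjoint sets with W(T_i) \le B for each i, we have \sum_{i=1}^{m+\Delta} P(S_i) \ge \sum_{i=1}^{m} P(T_i). -/
/-- If S_1,...,S_{m+Δ} are pairwise disjoint sets whose union
consists of the items of largest density, and at least m of them are critical
(W(S_i) > B), then for any pairwise disjoint feasible family T_1,...,T_m,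
∑ P(S_i) ≥ ∑ P(T_i). -/
theorem stmt_3 {ι : Type*} [DecidableEq ι] (p c : ι → ℝ)
    (hp : ∀ j, 0 < p j) (hc : ∀ j, 0 < c j) (B : ℝ) (hB : 0 < B)
    (m Δ : ℕ) (hm : 1 ≤ m)
    (S : Fin (m + Δ) → Finset ι)
    (hSdisj : ∀ i i', i ≠ i' → Disjoint (S i) (S i'))
    (hdens : ∀ s ∈ Finset.univ.biUnion S, ∀ t ∉ Finset.univ.biUnion S,
      p t / c t ≤ p s / c s)
    (J : Finset (Fin (m + Δ))) (hJcard : m ≤ J.card)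
    (hJcrit : ∀ i ∈ J, B < ∑ j ∈ S i, c j)
    (T : Fin m → Finset ι)
    (hTdisj : ∀ i i', i ≠ i' → Disjoint (T i) (T i'))
    (hTfeas : ∀ i, ∑ j ∈ T i, c j ≤ B) :
    ∑ i, ∑ j ∈ T i, p j ≤ ∑ i, ∑ j ∈ S i, p j := by
  classical
  set U := Finset.univ.biUnion S with hUdef
  set V := Finset.univ.biUnion T with hVdef
  have hSsum : ∀ f : ι → ℝ, ∑ j ∈ U, f j = ∑ i, ∑ j ∈ S i, f j := fun f =>
    Finset.sum_biUnion (fun i _ i' _ hne => hSdisj i i' hne)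
  have hTsum : ∀ f : ι → ℝ, ∑ j ∈ V, f j = ∑ i, ∑ j ∈ T i, f j := fun f =>
    Finset.sum_biUnion (fun i _ i' _ hne => hTdisj i i' hne)
  -- weight of V is at most m * B
  have hWV : ∑ j ∈ V, c j ≤ (m : ℝ) * B := by
    rw [hTsum]
    calc ∑ i, ∑ j ∈ T i, c j ≤ ∑ _i : Fin m, B :=
          Finset.sum_le_sum (fun i _ => hTfeas i)
      _ = (m : ℝ) * B := by simp [mul_comm]
  -- weight of U exceeds m * B
  have hWU : (m : ℝ) * B < ∑ j ∈ U, c j := by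
    have hJne : J.Nonempty := Finset.card_pos.mp (lt_of_lt_of_le hm hJcard)
    have h1 : (J.card : ℝ) * B < ∑ i ∈ J, ∑ j ∈ S i, c j := by
      have := Finset.sum_lt_sum_of_nonempty hJne (fun i hi => hJcrit i hi)
      simpa [mul_comm] using this
    have h2 : ∑ i ∈ J, ∑ j ∈ S i, c j ≤ ∑ i, ∑ j ∈ S i, c j :=
      Finset.sum_le_sum_of_subset_of_nonneg (Finset.subset_univ J)
        (fun i _ _ => Finset.sum_nonneg fun j _ => (hc j).le)
    have hm' : (m : ℝ) * B ≤ (J.card : ℝ) * B := by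
      apply mul_le_mul_of_nonneg_right _ hB.le
      exact_mod_cast hJcard
    rw [hSsum]; linarith
  have hWlt : ∑ j ∈ V, c j < ∑ j ∈ U, c j := lt_of_le_of_lt hWV hWU
  have hmB : (0 : ℝ) < (m : ℝ) * B := by
    have : (0 : ℝ) < (m : ℝ) := by exact_mod_cast hm
    positivity
  have hUne : U.Nonempty := by
    by_contra h
    rw [Finset.not_nonempty_iff_eq_empty] at h
    rw [h, Finset.sum_empty] at hWU
    linarith
  -- minimal density over U
  set δ := U.inf' hUne (fun j => p j / c j) with hδdef
  obtain ⟨s₀, hs₀, hδeq⟩ := Finset.exists_mem_eq_inf' hUne (fun j => p j / c j)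
  have hδpos : 0 < δ := by
    rw [hδdef, hδeq]; exact div_pos (hp s₀) (hc s₀)
  have hle_δ : ∀ j ∈ V \ U, p j / c j ≤ δ := by
    intro j hj
    rw [Finset.mem_sdiff] at hj
    rw [hδdef, hδeq]
    exact hdens s₀ hs₀ j hj.2
  have hδ_le : ∀ j ∈ U, δ ≤ p j / c j := fun j hj =>
    Finset.inf'_le (fun j => p j / c j) hj
  have hpc : ∀ j : ι, p j = (p j / c j) * c j := fun j =>
    (div_mul_cancel₀ _ (hc j).ne').symm
  -- profit of V \ U is at most δ * weight
  have hPA : ∑ j ∈ V \ U, p j ≤ δ * ∑ j ∈ V \ U, c j := by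
    rw [Finset.mul_sum]
    refine Finset.sum_le_sum (fun j hj => ?_)
    rw [hpc j]
    exact mul_le_mul_of_nonneg_right (hle_δ j hj) (hc j).le
  -- δ * weight is at most profit on U \ V
  have hPC : δ * ∑ j ∈ U \ V, c j ≤ ∑ j ∈ U \ V, p j := by
    rw [Finset.mul_sum]
    refine Finset.sum_le_sum (fun j hj => ?_)
    rw [Finset.mem_sdiff] at hj
    rw [hpc j]
    exact mul_le_mul_of_nonneg_right (hδ_le j hj.1) (hc j).le
  -- compare weights of the symmetric difference parts
  have e1 : ∑ j ∈ V ∩ U, c j + ∑ j ∈ V \ U, c j = ∑ j ∈ V, c j :=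
    Finset.sum_inter_add_sum_sdiff V U c
  have e2 : ∑ j ∈ U ∩ V, c j + ∑ j ∈ U \ V, c j = ∑ j ∈ U, c j :=
    Finset.sum_inter_add_sum_sdiff U V c
  have einter : ∑ j ∈ V ∩ U, c j = ∑ j ∈ U ∩ V, c j := by
    rw [Finset.inter_comm]
  have hWA : ∑ j ∈ V \ U, c j ≤ ∑ j ∈ U \ V, c j := by linarith
  have hmid : δ * ∑ j ∈ V \ U, c j ≤ δ * ∑ j ∈ U \ V, c j :=
    mul_le_mul_of_nonneg_left hWA hδpos.le
  -- conclude
  have p1 : ∑ j ∈ V ∩ U, p j + ∑ j ∈ V \ U, p j = ∑ j ∈ V, p j :=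
    Finset.sum_inter_add_sum_sdiff V U p
  have p2 : ∑ j ∈ U ∩ V, p j + ∑ j ∈ U \ V, p j = ∑ j ∈ U, p j :=
    Finset.sum_inter_add_sum_sdiff U V p
  have pinter : ∑ j ∈ V ∩ U, p j = ∑ j ∈ U ∩ V, p j := by
    rw [Finset.inter_comm]
  have : ∑ j ∈ V, p j ≤ ∑ j ∈ U, p j := by linarith
  rw [hSsum p, hTsum p] at this
  exact this
end
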